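/- arXiv:2305.07858 — 2 statements merged into one kernel-verified Lean document; each statement's English description precedes it below -/
import Mathlib

section
/- In NSym, for every integer n ≥ 3: Σ_{I = (i_1, …, i_l) ⊨ n, i_1 ≥ 2} i_1·(i_2 − 1)⋯(i_l − 1) · Λ^I = (1/2) · Σ_{I ∈ 𝒞_n, I begins with (1,2)} 2^{m_1(I)} · R_I + (3/8) · Σ_{I ∈ 𝒞_n, I begins with (1,1)} 2^{m_1(I)} · R_I, where the first sum is over all compositions I of n whose first part is at least 2, 𝒞_n is the set of compositions of n all of whose parts are 1 or 2 and whose last part is 1, and m_1(I) is the number of parts of I equal to 1. -/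
open scoped Classical

noncomputable section

/-- `NSym = ℚ⟨Λ₁, Λ₂, …⟩`, the free associative `ℚ`-algebra on noncommuting generators. -/
abbrev NSym : Type := FreeAlgebra ℚ ℕ

/-- The elementary noncommutative symmetric functions: `Λ 0 = 1` and `Λ (k+1)` is the
`(k+1)`-st generator. -/
def Lam : ℕ → NSym
  | 0 => 1
  | k + 1 => FreeAlgebra.ι ℚ k

/-- The complete homogeneous noncommutative symmetric functions, defined by `S 0 = 1` and
`S n = ∑_{k=1}^{n} (−1)^{k−1} Λ_k S_{n−k}` for `n ≥ 1`. -/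
def Sc : ℕ → NSym
  | 0 => 1
  | n + 1 => ∑ k ∈ Finset.range (n + 1), ((-1 : ℚ) ^ k) • (Lam (k + 1) * Sc (n - k))
  decreasing_by exact Nat.lt_succ_of_le (Nat.sub_le _ _)

/-- The noncommutative power sums of the first kind:
`Ψ n = ∑_{k=0}^{n−1} (−1)^k (n−k) Λ_k S_{n−k}`. -/
def Psi (n : ℕ) : NSym :=
  ∑ k ∈ Finset.range n, ((-1 : ℚ) ^ k * ((n - k : ℕ) : ℚ)) • (Lam k * Sc (n - k))

/-- `Λ^I`, the product of the `Λ`'s over the parts of a composition. -/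
def LamProd {n : ℕ} (I : Composition n) : NSym := (I.blocks.map Lam).prod

/-- `S^I`, the product of the `S`'s over the parts of a composition. -/
def ScProd {n : ℕ} (I : Composition n) : NSym := (I.blocks.map Sc).prod

/-- `Ψ^I`, the product of the `Ψ`'s over the parts of a composition. -/
def PsiProd {n : ℕ} (I : Composition n) : NSym := (I.blocks.map Psi).prod

/-- `J` is a coarsening of `I` if `I` can be partitioned into consecutive nonempty blocks
whose block sums, in order, form `J`. -/
def IsCoarsening (I J : List ℕ) : Prop :=
  ∃ P : List (List ℕ), (∀ p ∈ P, p ≠ []) ∧ P.flatten = I ∧ P.map List.sum = J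

/-- The ribbon Schur function `R_I = ∑_{J a coarsening of I} (−1)^{ℓ(I)−ℓ(J)} S^J`. -/
def Rib {n : ℕ} (I : Composition n) : NSym :=
  ∑ J : Composition n,
    if IsCoarsening I.blocks J.blocks then ((-1 : ℚ) ^ (I.length - J.length)) • ScProd J else 0

/-!
Both sides are written as combinations of the words `Λ^L` and compared coefficientwise. Since
`S_n = ∑_{L ⊨ n} (-1)^{n-ℓ(L)} Λ^L`, the word `Λ^L` occurs in `S^J` exactly when `L` refines `J`,
so its coefficient in `R_I` is a signed sum over the common coarsenings of `I` and `L`. These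
correspond to the subsets of the set of proper partial sums (descents) shared by `I` and `L`, and
inclusion–exclusion leaves `±1` if `I` and `L` have disjoint descent sets and `0` otherwise.

The coefficient of `Λ^L` on the right is therefore a weighted count of the `I ∈ 𝒞_n` whose
descents avoid those of `L`. Removing the first part (`1` or `2`) of `I` gives the recursion
`W(l₁) = 2 W(l₁ - 1) - W(l₁ - 2)` in the first part of `L`, solved by
`W = -2 (-1)^{ℓ(L)} l₁ (l₂ - 1) ⋯ (l_k - 1)`; the combination with weights `1/2` and `3/8` of the
two families in the theorem then reduces to `l₁ (l₂ - 1) ⋯ (l_k - 1)` when `l₁ ≥ 2` and to `0`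
when `l₁ = 1`.
-/

def compositionList (n : ℕ) : Finset (List ℕ) :=
  Finset.univ.image (Composition.blocks : Composition n → List ℕ)

theorem mem_compositionList {n : ℕ} {L : List ℕ} :
    L ∈ compositionList n ↔ L.sum = n ∧ ∀ p ∈ L, 0 < p := by
  simp only [compositionList, Finset.mem_image, Finset.mem_univ, true_and]
  exact ⟨fun ⟨I, hI⟩ => hI ▸ ⟨I.blocks_sum, fun _ => I.blocks_pos⟩,
    fun h => ⟨⟨L, h.2 _, h.1⟩, rfl⟩⟩

theorem sum_univ_composition_blocks {M : Type*} [AddCommMonoid M] (n : ℕ) (f : List ℕ → M) :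
    ∑ I : Composition n, f I.blocks = ∑ L ∈ compositionList n, f L :=
  (Finset.sum_image fun _ _ _ _ h => Composition.ext h).symm

theorem ne_nil_of_mem_compositionList {n : ℕ} {L : List ℕ} (hn : 0 < n)
    (hL : L ∈ compositionList n) : L ≠ [] := by
  rintro rfl
  simp [mem_compositionList] at hL
  omega

theorem cons_mem_compositionList {a m : ℕ} {L : List ℕ} :
    a :: L ∈ compositionList (m + a) ↔ 0 < a ∧ L ∈ compositionList m := by
  simp only [mem_compositionList, List.sum_cons, List.mem_cons, forall_eq_or_imp]
  constructor
  · rintro ⟨hs, ha, hL⟩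
    exact ⟨ha, by omega, hL⟩
  · rintro ⟨ha, hs, hL⟩
    exact ⟨by omega, ha, hL⟩

theorem cons_sub_mem_compositionList {d j n : ℕ} {K : List ℕ} (hdj : d < j)
    (hK : j :: K ∈ compositionList (n + d)) : (j - d) :: K ∈ compositionList n := by
  simp only [mem_compositionList, List.sum_cons, List.mem_cons, forall_eq_or_imp] at hK ⊢
  exact ⟨by omega, by omega, hK.2.2⟩

theorem add_cons_mem_compositionList {n a i : ℕ} {I : List ℕ}
    (h : a :: i :: I ∈ compositionList n) : (a + i) :: I ∈ compositionList n := by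
  simp only [mem_compositionList, List.sum_cons, List.mem_cons, forall_eq_or_imp] at h ⊢
  exact ⟨by omega, by omega, h.2.2.2⟩

theorem append_mem_compositionList {j s : ℕ} {A L : List ℕ} (hA : A ∈ compositionList j)
    (hL : L ∈ compositionList s) : A ++ L ∈ compositionList (j + s) := by
  rw [mem_compositionList] at *
  simp only [List.sum_append, List.mem_append, hA.1, hL.1, true_and]
  exact fun p hp => hp.elim (hA.2 p) (hL.2 p)

theorem compositionList_zero : compositionList 0 = {[]} := by
  ext L
  rw [mem_compositionList, Finset.mem_singleton]
  rcases L with _ | ⟨a, L⟩ <;> simp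
  omega

theorem compositionList_one : compositionList 1 = {[1]} := by
  ext L
  rw [mem_compositionList, Finset.mem_singleton]
  rcases L with _ | ⟨a, _ | ⟨b, L⟩⟩ <;> simp <;> omega

theorem sum_compositionList_filter_headI {M : Type*} [AddCommMonoid M] {a : ℕ} (m : ℕ)
    (ha : 0 < a) (p : List ℕ → Prop) [DecidablePred p] (f : List ℕ → M) :
    ∑ J ∈ compositionList (m + a) with J.headI = a ∧ p J, f J
      = ∑ J ∈ compositionList m with p (a :: J), f (a :: J) := by
  have hcons : ∀ J ∈ compositionList (m + a), J.headI = a → a :: J.tail = J := by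
    intro J hJ hh
    obtain ⟨j, J, rfl⟩ := List.exists_cons_of_ne_nil (ne_nil_of_mem_compositionList (by omega) hJ)
    simp_all
  refine Finset.sum_nbij' List.tail (a :: ·) ?_ ?_ ?_ (fun _ _ => rfl) ?_
  · intro J hJ
    simp only [Finset.mem_filter] at hJ ⊢
    rw [← hcons J hJ.1 hJ.2.1] at hJ
    exact ⟨(cons_mem_compositionList.1 hJ.1).2, hJ.2.2⟩
  · intro J hJ
    simp only [Finset.mem_filter] at hJ ⊢
    exact ⟨cons_mem_compositionList.2 ⟨ha, hJ.1⟩, rfl, hJ.2⟩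
  · intro J hJ
    simp only [Finset.mem_filter] at hJ
    exact hcons J hJ.1 hJ.2.1
  · intro J hJ
    simp only [Finset.mem_filter] at hJ
    rw [hcons J hJ.1 hJ.2.1]

theorem sum_compositionList_succ {M : Type*} [AddCommMonoid M] (n : ℕ) (f : List ℕ → M) :
    ∑ L ∈ compositionList (n + 1), f L
      = ∑ k ∈ Finset.range (n + 1), ∑ L ∈ compositionList (n - k), f ((k + 1) :: L) := by
  have hhead : ∀ L ∈ compositionList (n + 1), 1 ≤ L.headI ∧ L.headI ≤ n + 1 := by
    intro L hL
    obtain ⟨a, L, rfl⟩ := List.exists_cons_of_ne_nil (ne_nil_of_mem_compositionList n.succ_pos hL)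
    rw [mem_compositionList] at hL
    simp only [List.headI_cons, ← hL.1, List.sum_cons]
    exact ⟨hL.2 a List.mem_cons_self, Nat.le_add_right a _⟩
  rw [← Finset.sum_fiberwise_of_maps_to (g := fun L => L.headI - 1) (t := Finset.range (n + 1))
    fun L hL => Finset.mem_range.2 (by have := hhead L hL; omega)]
  refine Finset.sum_congr rfl fun k hk => ?_
  have hk : n + 1 = (n - k) + (k + 1) := by simp at hk; omega
  have h := sum_compositionList_filter_headI (n - k) k.succ_pos (fun _ => True) f
  simp only [and_true, Finset.filter_true] at h
  rw [← h, ← hk]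
  refine Finset.sum_congr (Finset.filter_congr fun L hL => ?_) fun _ _ => rfl
  have := hhead L hL
  omega

def lamList (L : List ℕ) : NSym := (L.map Lam).prod

def scList (L : List ℕ) : NSym := (L.map Sc).prod

theorem lamList_cons (a : ℕ) (L : List ℕ) : lamList (a :: L) = Lam a * lamList L := by
  simp [lamList]

theorem lamList_append (A L : List ℕ) : lamList (A ++ L) = lamList A * lamList L := by
  simp [lamList]

theorem scList_cons (a : ℕ) (L : List ℕ) : scList (a :: L) = Sc a * scList L := by
  simp [scList]

theorem neg_one_pow_add_two_mul {R : Type*} [Monoid R] [HasDistribNeg R] {a b : ℕ} :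
    (-1 : R) ^ (a + 2 * b) = (-1) ^ a := by
  rw [pow_add, (even_two_mul b).neg_one_pow, mul_one]

theorem neg_one_pow_sub_of_le {R : Type*} [Monoid R] [HasDistribNeg R] {a b : ℕ} (h : b ≤ a) :
    (-1 : R) ^ (a - b) = (-1) ^ (a + b) := by
  rw [← neg_one_pow_add_two_mul (b := b)]
  congr 1
  omega

theorem neg_neg_one_pow_mul_neg_neg_one_pow_mul {R : Type*} [Monoid R] [HasDistribNeg R]
    (l : ℕ) (x : R) : -(-1 : R) ^ l * (-(-1) ^ l * x) = x := by
  rw [← mul_assoc, neg_mul_neg, ← pow_add, ← two_mul, (even_two_mul l).neg_one_pow, one_mul]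

theorem sc_eq_sum_lamList (n : ℕ) :
    Sc n = ∑ L ∈ compositionList n, ((-1 : ℚ) ^ (n + L.length)) • lamList L := by
  induction n using Nat.strong_induction_on with
  | _ n ih =>
    match n with
    | 0 => simp [Sc, compositionList_zero, lamList]
    | n + 1 =>
      rw [Sc, sum_compositionList_succ]
      refine Finset.sum_congr rfl fun k hk => ?_
      rw [ih (n - k) (by omega), Finset.mul_sum, Finset.smul_sum]
      refine Finset.sum_congr rfl fun L _ => ?_
      rw [mul_smul_comm, smul_smul, ← pow_add, lamList_cons, List.length_cons]
      have : n + 1 + (L.length + 1) = k + (n - k + L.length) + 2 * 1 := by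
        simp at hk
        omega
      rw [this, neg_one_pow_add_two_mul]

theorem isCoarsening_nil_left {J : List ℕ} : IsCoarsening [] J ↔ J = [] := by
  constructor
  · rintro ⟨P, hP, hflat, rfl⟩
    rw [List.flatten_eq_nil_iff] at hflat
    rw [List.eq_nil_iff_forall_not_mem.2 fun p hp => hP p hp (hflat p hp), List.map_nil]
  · rintro rfl
    exact ⟨[], by simp, rfl, rfl⟩

theorem isCoarsening_singleton_left {x : ℕ} {J : List ℕ} : IsCoarsening [x] J ↔ J = [x] := by
  constructor
  · rintro ⟨_ | ⟨_ | ⟨a, A⟩, P⟩, hP, hflat, rfl⟩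
    · simp at hflat
    · simp at hP
    · simp only [List.flatten_cons, List.cons_append, List.cons.injEq, List.append_eq_nil_iff,
        List.flatten_eq_nil_iff] at hflat
      obtain ⟨rfl, rfl, hflat⟩ := hflat
      rw [List.eq_nil_iff_forall_not_mem.2 fun p hp => hP p (List.mem_cons_of_mem _ hp)
        (hflat p hp)]
      simp
  · rintro rfl
    exact ⟨[[x]], by simp, rfl, rfl⟩

theorem isCoarsening_cons_right {L J : List ℕ} {j : ℕ} :
    IsCoarsening L (j :: J) ↔
      ∃ A L', A ≠ [] ∧ A.sum = j ∧ L = A ++ L' ∧ IsCoarsening L' J := by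
  constructor
  · rintro ⟨_ | ⟨A, P⟩, hP, rfl, hsum⟩
    · simp at hsum
    · simp only [List.map_cons, List.cons.injEq] at hsum
      exact ⟨A, P.flatten, hP A List.mem_cons_self, hsum.1, rfl,
        P, fun p hp => hP p (List.mem_cons_of_mem _ hp), rfl, hsum.2⟩
  · rintro ⟨A, L', hA, rfl, rfl, P, hP, rfl, rfl⟩
    exact ⟨A :: P, by simpa [hA] using hP, rfl, rfl⟩

theorem isCoarsening_cons_cons {x y : ℕ} {X J : List ℕ} :
    IsCoarsening (x :: y :: X) J ↔
      (∃ J', J = x :: J' ∧ IsCoarsening (y :: X) J') ∨ IsCoarsening ((x + y) :: X) J := by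
  constructor
  · rintro ⟨_ | ⟨_ | ⟨a, _ | ⟨b, A⟩⟩, P⟩, hP, hflat, rfl⟩
    · simp at hflat
    · simp at hP
    · simp only [List.flatten_cons, List.cons_append, List.nil_append, List.cons.injEq] at hflat
      obtain ⟨rfl, hflat⟩ := hflat
      exact Or.inl ⟨_, by simp, P, fun p hp => hP p (List.mem_cons_of_mem _ hp), hflat, rfl⟩
    · simp only [List.flatten_cons, List.cons_append, List.cons.injEq] at hflat
      obtain ⟨rfl, rfl, hflat⟩ := hflat
      refine Or.inr ⟨((a + b) :: A) :: P, ?_, by simp [hflat], by simp [add_assoc]⟩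
      simpa using fun p hp => hP p (List.mem_cons_of_mem _ hp)
  · rintro (⟨J', rfl, P, hP, hflat, rfl⟩ | ⟨_ | ⟨_ | ⟨c, A⟩, P⟩, hP, hflat, rfl⟩)
    · exact ⟨[x] :: P, by simpa using hP, by simp [hflat], by simp⟩
    · simp at hflat
    · simp at hP
    · simp only [List.flatten_cons, List.cons_append, List.cons.injEq] at hflat
      obtain ⟨rfl, hflat⟩ := hflat
      refine ⟨(x :: y :: A) :: P, ?_, by simp [hflat], by simp [add_assoc]⟩
      simpa using fun p hp => hP p (List.mem_cons_of_mem _ hp)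

theorem IsCoarsening.le_headI {x : ℕ} {X J : List ℕ} (h : IsCoarsening (x :: X) J) :
    x ≤ J.headI := by
  obtain ⟨_ | ⟨_ | ⟨a, A⟩, P⟩, hP, hflat, rfl⟩ := h
  · simp at hflat
  · simp at hP
  · simp only [List.flatten_cons, List.cons_append, List.cons.injEq] at hflat
    simp [hflat.1]

theorem IsCoarsening.length_le {I J : List ℕ} (h : IsCoarsening I J) : J.length ≤ I.length := by
  obtain ⟨P, hP, rfl, rfl⟩ := h
  rw [List.length_map, List.length_flatten, ← List.length_map (f := List.length)]
  refine List.length_le_sum_of_one_le _ fun i hi => ?_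
  obtain ⟨p, hp, rfl⟩ := List.mem_map.1 hi
  exact List.length_pos_iff.2 (hP p hp)

theorem isCoarsening_sum_singleton {L : List ℕ} (hL : L ≠ []) : IsCoarsening L [L.sum] :=
  ⟨[L], by simpa using hL, by simp, by simp⟩

theorem isCoarsening_cons_cons_cons {x y : ℕ} {X J : List ℕ} (hy : 0 < y) :
    IsCoarsening (x :: y :: X) (x :: J) ↔ IsCoarsening (y :: X) J := by
  rw [isCoarsening_cons_cons]
  refine ⟨?_, fun h => Or.inl ⟨J, rfl, h⟩⟩
  rintro (⟨J', hJ, h⟩ | h)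
  · exact (List.cons.inj hJ).2 ▸ h
  · have := h.le_headI
    simp at this
    omega

theorem isCoarsening_cons_cons_and_headI_ne {x y : ℕ} {X J : List ℕ} (hy : 0 < y) :
    IsCoarsening (x :: y :: X) J ∧ J.headI ≠ x ↔ IsCoarsening ((x + y) :: X) J := by
  rw [isCoarsening_cons_cons]
  refine ⟨?_, fun h => ⟨Or.inr h, by have := h.le_headI; omega⟩⟩
  rintro ⟨⟨J', rfl, _⟩ | h, hne⟩
  · simp at hne
  · exact h

theorem eq_of_append_eq_append_of_sum_eq {A B L M : List ℕ} (hA : ∀ p ∈ A, 0 < p)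
    (hB : ∀ p ∈ B, 0 < p) (hs : A.sum = B.sum) (h : A ++ L = B ++ M) : A = B := by
  have key : ∀ {A B : List ℕ}, (∀ p ∈ B, 0 < p) → A.sum = B.sum → A <+: B → A = B := by
    rintro A B hB hs ⟨C, rfl⟩
    rw [List.sum_append, left_eq_add, List.sum_eq_zero_iff] at hs
    have hC : C = [] := List.eq_nil_iff_forall_not_mem.2 fun p hp => by
      have := hB p (List.mem_append_right _ hp)
      have := hs p hp
      omega
    rw [hC, List.append_nil]
  rcases List.prefix_or_prefix_of_prefix (List.prefix_append A L) (h ▸ List.prefix_append B M)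
    with h' | h'
  · exact key hB hs h'
  · exact (key hA hs.symm h').symm

theorem filter_isCoarsening_cons_eq_image {j s : ℕ} {J : List ℕ} (hj : 0 < j) :
    (compositionList (j + s)).filter (IsCoarsening · (j :: J))
      = (compositionList j ×ˢ (compositionList s).filter (IsCoarsening · J)).image
          fun p => p.1 ++ p.2 := by
  ext L
  simp only [Finset.mem_filter, Finset.mem_image, Finset.mem_product, Prod.exists,
    isCoarsening_cons_right]
  constructor
  · rintro ⟨hL, A, L', hA, rfl, rfl, hL'⟩
    rw [mem_compositionList, List.sum_append] at hL
    refine ⟨A, L', ⟨?_, ?_, hL'⟩, rfl⟩ <;> rw [mem_compositionList]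
    · exact ⟨rfl, fun p hp => hL.2 p (List.mem_append_left _ hp)⟩
    · exact ⟨by omega, fun p hp => hL.2 p (List.mem_append_right _ hp)⟩
  · rintro ⟨A, L', ⟨hA, hL', hco⟩, rfl⟩
    exact ⟨append_mem_compositionList hA hL', A, L',
      ne_nil_of_mem_compositionList hj hA, (mem_compositionList.1 hA).1, rfl, hco⟩

theorem scList_eq_sum_lamList {n : ℕ} {J : List ℕ} (hJ : J ∈ compositionList n) :
    scList J = ∑ L ∈ compositionList n with IsCoarsening L J,
      ((-1 : ℚ) ^ (n + L.length)) • lamList L := by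
  induction J generalizing n with
  | nil =>
    obtain rfl : 0 = n := by simpa [mem_compositionList] using hJ
    simp [compositionList_zero, Finset.filter_singleton, isCoarsening_nil_left, scList, lamList]
  | cons j J ih =>
    obtain ⟨s, rfl⟩ : ∃ s, n = j + s := ⟨J.sum, by simp [(mem_compositionList.1 hJ).1.symm]⟩
    obtain ⟨hj, hJ⟩ := cons_mem_compositionList.1 (by rwa [add_comm] at hJ)
    have hinj : Set.InjOn (fun p : List ℕ × List ℕ => p.1 ++ p.2)
        ↑(compositionList j ×ˢ (compositionList s).filter (IsCoarsening · J)) := by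
      rintro ⟨A, L⟩ hAL ⟨B, M⟩ hBM (h : A ++ L = B ++ M)
      simp only [Finset.coe_product, Set.mem_prod, Finset.mem_coe, mem_compositionList] at hAL hBM
      obtain rfl :=
        eq_of_append_eq_append_of_sum_eq hAL.1.2 hBM.1.2 (hAL.1.1.trans hBM.1.1.symm) h
      rw [List.append_cancel_left h]
    rw [scList_cons, sc_eq_sum_lamList, ih hJ, Finset.sum_mul_sum,
      filter_isCoarsening_cons_eq_image hj, Finset.sum_image hinj, Finset.sum_product]
    refine Finset.sum_congr rfl fun A _ => Finset.sum_congr rfl fun L _ => ?_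
    rw [smul_mul_smul_comm, ← pow_add, lamList_append, List.length_append]
    ring_nf

/-- `I` and `K` have no proper partial sum in common, i.e. their descent sets are disjoint;
the smaller of the two first parts is cancelled against the larger one. -/
def DisjointDescents : List ℕ → List ℕ → Prop
  | a :: i :: I, b :: k :: K =>
    if a < b then DisjointDescents (i :: I) ((b - a) :: k :: K)
    else if b < a then DisjointDescents ((a - b) :: i :: I) (k :: K)
    else False
  | _, _ => True
termination_by I K => I.length + K.length

namespace DisjointDescents

theorem nil_left (K : List ℕ) : DisjointDescents [] K := by
  simp [DisjointDescents]

theorem nil_right (I : List ℕ) : DisjointDescents I [] := by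
  rcases I with _ | ⟨_, _ | _⟩ <;> simp [DisjointDescents]

theorem singleton_left (a : ℕ) (K : List ℕ) : DisjointDescents [a] K := by
  cases K <;> simp [DisjointDescents]

theorem singleton_right (I : List ℕ) (b : ℕ) : DisjointDescents I [b] := by
  rcases I with _ | ⟨_, _ | _⟩ <;> simp [DisjointDescents]

theorem cons_of_lt {a b : ℕ} {I K : List ℕ} (h : a < b) :
    DisjointDescents (a :: I) (b :: K) ↔ DisjointDescents I ((b - a) :: K) := by
  rcases I with _ | ⟨_, _⟩ <;> rcases K with _ | ⟨_, _⟩ <;> simp [DisjointDescents, h]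

theorem cons_of_gt {a b : ℕ} {I K : List ℕ} (h : b < a) :
    DisjointDescents (a :: I) (b :: K) ↔ DisjointDescents ((a - b) :: I) K := by
  rcases I with _ | ⟨_, _⟩ <;> rcases K with _ | ⟨_, _⟩ <;>
    simp [DisjointDescents, h, h.not_gt]

theorem cons_self {a : ℕ} {I K : List ℕ} :
    DisjointDescents (a :: I) (a :: K) ↔ I = [] ∨ K = [] := by
  rcases I with _ | ⟨_, _⟩ <;> rcases K with _ | ⟨_, _⟩ <;> simp [DisjointDescents]

theorem comm : ∀ {I K : List ℕ}, DisjointDescents I K ↔ DisjointDescents K I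
  | [], K => iff_of_true (nil_left K) (nil_right K)
  | [a], K => iff_of_true (singleton_left a K) (singleton_right K a)
  | _ :: _ :: _, [] => iff_of_true (nil_right _) (nil_left _)
  | _ :: _ :: _, [b] => iff_of_true (singleton_right _ b) (singleton_left b _)
  | a :: i :: I, b :: k :: K => by
    rcases lt_trichotomy a b with h | rfl | h
    · rw [cons_of_lt h, cons_of_gt h]
      exact comm
    · simp [cons_self]
    · rw [cons_of_gt h, cons_of_lt h]
      exact comm
termination_by I K => I.length + K.length

theorem add_cons_of_lt {a b y : ℕ} {Y K : List ℕ} (h : a < b) :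
    DisjointDescents ((a + y) :: Y) (b :: K) ↔ DisjointDescents (a :: y :: Y) (b :: K) := by
  rw [cons_of_lt h]
  rcases lt_trichotomy (a + y) b with h' | h' | h'
  · rw [cons_of_lt h', cons_of_lt (by omega : y < b - a), Nat.sub_sub]
  · rw [h', show b - a = y by omega, cons_self, cons_self]
  · rw [cons_of_gt h', cons_of_gt (by omega : b - a < y), show a + y - b = y - (b - a) by omega]

theorem add_cons_add_cons {c y z : ℕ} {Y Z : List ℕ} :
    DisjointDescents ((c + y) :: Y) ((c + z) :: Z) ↔ DisjointDescents (y :: Y) (z :: Z) := by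
  rcases lt_trichotomy y z with h | rfl | h
  · rw [cons_of_lt h, cons_of_lt (by omega), Nat.add_sub_add_left]
  · rw [cons_self, cons_self]
  · rw [cons_of_gt h, cons_of_gt (by omega), Nat.add_sub_add_left]

end DisjointDescents

theorem isCoarsening_and_isCoarsening_add_cons {a b i : ℕ} {I K J : List ℕ} (hab : a < b)
    (hi : 0 < i) :
    IsCoarsening (a :: i :: I) J ∧ IsCoarsening (b :: K) J
      ↔ IsCoarsening ((a + i) :: I) J ∧ IsCoarsening (b :: K) J := by
  rw [← isCoarsening_cons_cons_and_headI_ne hi]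
  refine ⟨fun ⟨h, hK⟩ => ⟨⟨h, ?_⟩, hK⟩, fun ⟨⟨h, _⟩, hK⟩ => ⟨h, hK⟩⟩
  have := hK.le_headI
  omega

theorem sum_commonCoarsening_singleton {n : ℕ} (hn : 0 < n) {K : List ℕ}
    (hK : K ∈ compositionList n) :
    ∑ J ∈ compositionList n with IsCoarsening [n] J ∧ IsCoarsening K J, (-1 : ℚ) ^ J.length
      = -1 := by
  have hKn : IsCoarsening K [n] := by
    simpa [(mem_compositionList.1 hK).1] using
      isCoarsening_sum_singleton (ne_nil_of_mem_compositionList hn hK)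
  rw [Finset.filter_congr fun J _ => show IsCoarsening [n] J ∧ IsCoarsening K J ↔ J = [n] by
    rw [isCoarsening_singleton_left]
    exact ⟨And.left, fun h => ⟨h, h ▸ hKn⟩⟩]
  rw [Finset.filter_eq', if_pos (by simpa [mem_compositionList] using hn), Finset.sum_singleton]
  simp

/-- A common coarsening either keeps the common first part `a` in both, or merges it with the
next part in both. -/
theorem sum_commonCoarsening_cons_cons_self {M : Type*} [AddCommMonoid M] {a i k m : ℕ}
    {I K : List ℕ} (ha : 0 < a) (hi : 0 < i) (hk : 0 < k) (f : List ℕ → M) :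
    ∑ J ∈ compositionList (m + a) with
        IsCoarsening (a :: i :: I) J ∧ IsCoarsening (a :: k :: K) J, f J
      = ∑ J ∈ compositionList m with IsCoarsening (i :: I) J ∧ IsCoarsening (k :: K) J,
          f (a :: J)
        + ∑ J ∈ compositionList (m + a) with
            IsCoarsening ((a + i) :: I) J ∧ IsCoarsening ((a + k) :: K) J, f J := by
  rw [← Finset.sum_filter_add_sum_filter_not _ (fun J => J.headI = a), Finset.filter_filter,
    Finset.filter_filter]
  congr 1
  · rw [Finset.filter_congr fun J _ => and_comm, sum_compositionList_filter_headI m ha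
      (fun J => IsCoarsening (a :: i :: I) J ∧ IsCoarsening (a :: k :: K) J)]
    simp only [isCoarsening_cons_cons_cons hi, isCoarsening_cons_cons_cons hk]
  · refine Finset.sum_congr (Finset.filter_congr fun J _ => ?_) fun _ _ => rfl
    rw [← isCoarsening_cons_cons_and_headI_ne hi, ← isCoarsening_cons_cons_and_headI_ne hk]
    tauto

theorem sum_commonCoarsening_neg_one_pow : ∀ {n : ℕ} {I K : List ℕ}, 0 < n →
    I ∈ compositionList n → K ∈ compositionList n →
    ∑ J ∈ compositionList n with IsCoarsening I J ∧ IsCoarsening K J, (-1 : ℚ) ^ J.length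
      = if DisjointDescents I K then -1 else 0
  | _, [], _, hn, hI, _ => absurd rfl (ne_nil_of_mem_compositionList hn hI)
  | _, _, [], hn, _, hK => absurd rfl (ne_nil_of_mem_compositionList hn hK)
  | n, [a], K, hn, hI, hK => by
    obtain ⟨rfl, -⟩ : a = n ∧ 0 < a := by simpa [mem_compositionList] using hI
    rw [sum_commonCoarsening_singleton hn hK, if_pos (DisjointDescents.singleton_left _ _)]
  | n, I, [b], hn, hI, hK => by
    obtain ⟨rfl, -⟩ : b = n ∧ 0 < b := by simpa [mem_compositionList] using hK
    rw [Finset.filter_congr fun J _ => and_comm, sum_commonCoarsening_singleton hn hI,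
      if_pos (DisjointDescents.singleton_right _ _)]
  | n, a :: i :: I, b :: k :: K, hn, hI, hK => by
    have hi : 0 < i := (mem_compositionList.1 hI).2 i (by simp)
    have hk : 0 < k := (mem_compositionList.1 hK).2 k (by simp)
    -- if `a < b`, every common coarsening begins with a part `≥ b`, so `a` is merged with `i`
    rcases lt_trichotomy a b with hab | rfl | hab
    · rw [Finset.filter_congr fun J _ => isCoarsening_and_isCoarsening_add_cons hab hi,
        sum_commonCoarsening_neg_one_pow hn (add_cons_mem_compositionList hI) hK,
        DisjointDescents.add_cons_of_lt hab]
    · obtain ⟨m, rfl⟩ : ∃ m, n = m + a :=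
        ⟨n - a, by have := (mem_compositionList.1 hI).1; simp at this; omega⟩
      obtain ⟨ha, hI'⟩ := cons_mem_compositionList.1 hI
      have hK' := (cons_mem_compositionList.1 hK).2
      have hm : 0 < m := by simp [mem_compositionList] at hI'; omega
      have hnd : ¬ DisjointDescents (a :: i :: I) (a :: k :: K) := by
        simp [DisjointDescents.cons_self]
      rw [sum_commonCoarsening_cons_cons_self ha hi hk]
      simp only [List.length_cons, pow_succ, mul_neg_one, Finset.sum_neg_distrib]
      rw [sum_commonCoarsening_neg_one_pow hm hI' hK', sum_commonCoarsening_neg_one_pow hn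
        (add_cons_mem_compositionList hI) (add_cons_mem_compositionList hK),
        DisjointDescents.add_cons_add_cons, if_neg hnd]
      split_ifs <;> norm_num
    · rw [Finset.filter_congr fun J _ => and_comm,
        Finset.filter_congr fun J _ => isCoarsening_and_isCoarsening_add_cons hab hk,
        sum_commonCoarsening_neg_one_pow hn (add_cons_mem_compositionList hK) hI,
        DisjointDescents.add_cons_of_lt hab, DisjointDescents.comm]
termination_by _ I K => I.length + K.length

theorem rib_eq_sum_lamList {n : ℕ} (hn : 0 < n) (I : Composition n) :
    Rib I = ∑ L ∈ compositionList n,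
      (if DisjointDescents I.blocks L then -(-1 : ℚ) ^ (n + I.blocks.length + L.length) else 0)
        • lamList L := by
  calc Rib I
      = ∑ J ∈ compositionList n, ∑ L ∈ compositionList n,
          (if IsCoarsening I.blocks J ∧ IsCoarsening L J then
            (-1 : ℚ) ^ J.length * (-1) ^ (n + I.blocks.length + L.length) else 0)
              • lamList L := by
        refine (sum_univ_composition_blocks n fun J => if IsCoarsening I.blocks J then
          ((-1 : ℚ) ^ (I.length - J.length)) • scList J else 0).trans ?_
        refine Finset.sum_congr rfl fun J hJ => ?_
        split_ifs with hIJ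
        · rw [scList_eq_sum_lamList hJ, Finset.smul_sum, Finset.sum_filter]
          refine Finset.sum_congr rfl fun L _ => ?_
          by_cases hLJ : IsCoarsening L J
          · rw [if_pos hLJ, if_pos ⟨hIJ, hLJ⟩, smul_smul, neg_one_pow_sub_of_le hIJ.length_le]
            congr 1
            ring
          · rw [if_neg hLJ, if_neg fun h => hLJ h.2, zero_smul]
        · simp [hIJ]
    _ = ∑ L ∈ compositionList n,
          ((∑ J ∈ compositionList n with IsCoarsening I.blocks J ∧ IsCoarsening L J,
            (-1 : ℚ) ^ J.length) * (-1) ^ (n + I.blocks.length + L.length)) • lamList L := by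
        rw [Finset.sum_comm]
        refine Finset.sum_congr rfl fun L _ => ?_
        rw [Finset.sum_filter, Finset.sum_mul, Finset.sum_smul]
        simp only [ite_mul, zero_mul]
    _ = _ := by
        refine Finset.sum_congr rfl fun L hL => ?_
        rw [sum_commonCoarsening_neg_one_pow hn (Finset.mem_image_of_mem _ (Finset.mem_univ I)) hL]
        split_ifs <;> simp only [neg_one_mul, zero_mul]

abbrev IsOneTwoEndingInOne (L : List ℕ) : Prop := (∀ i ∈ L, i = 1 ∨ i = 2) ∧ L.getLast? = some 1

theorem IsOneTwoEndingInOne.ne_nil {L : List ℕ} (h : IsOneTwoEndingInOne L) : L ≠ [] := by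
  rintro rfl
  simp [IsOneTwoEndingInOne] at h

theorem IsOneTwoEndingInOne.headI {L : List ℕ} (h : IsOneTwoEndingInOne L) :
    L.headI = 1 ∨ L.headI = 2 := by
  obtain ⟨c, L, rfl⟩ := List.exists_cons_of_ne_nil h.ne_nil
  exact h.1 c List.mem_cons_self

theorem isOneTwoEndingInOne_one_cons {L : List ℕ} (hL : L ≠ []) :
    IsOneTwoEndingInOne (1 :: L) ↔ IsOneTwoEndingInOne L := by
  obtain ⟨x, L, rfl⟩ := List.exists_cons_of_ne_nil hL
  simp [IsOneTwoEndingInOne]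

theorem isOneTwoEndingInOne_two_cons {L : List ℕ} :
    IsOneTwoEndingInOne (2 :: L) ↔ IsOneTwoEndingInOne L := by
  rcases L with _ | ⟨x, L⟩ <;> simp [IsOneTwoEndingInOne]

/-- `2^{m₁(I)}` times the part `(-1)^{|I| + ℓ(I)}` of the sign of `Λ^L` in `R_I` that depends on
`I` (see `rib_eq_sum_lamList`). -/
def weight (I : List ℕ) : ℚ := 2 ^ I.count 1 * (-1) ^ (I.sum + I.length)

theorem weight_one_cons (I : List ℕ) : weight (1 :: I) = 2 * weight I := by
  simp only [weight, List.count_cons_self, List.sum_cons, List.length_cons]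
  ring

theorem weight_two_cons (I : List ℕ) : weight (2 :: I) = -weight I := by
  simp only [weight, List.count_cons, List.sum_cons, List.length_cons]
  norm_num
  ring

def weightSum (n : ℕ) (p : List ℕ → Prop) [DecidablePred p] : ℚ :=
  ∑ I ∈ compositionList n with IsOneTwoEndingInOne I ∧ p I, weight I

theorem weightSum_congr {n : ℕ} {p q : List ℕ → Prop} [DecidablePred p] [DecidablePred q]
    (h : ∀ I ∈ compositionList n, IsOneTwoEndingInOne I → (p I ↔ q I)) :
    weightSum n p = weightSum n q :=
  Finset.sum_congr (Finset.filter_congr fun I hI => and_congr_right (h I hI)) fun _ _ => rfl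

theorem weightSum_eq_zero {n : ℕ} {p : List ℕ → Prop} [DecidablePred p]
    (h : ∀ I ∈ compositionList n, IsOneTwoEndingInOne I → ¬ p I) : weightSum n p = 0 :=
  Finset.sum_eq_zero fun I hI => by
    simp only [Finset.mem_filter] at hI
    exact absurd hI.2.2 (h I hI.1 hI.2.1)

theorem weightSum_zero (p : List ℕ → Prop) [DecidablePred p] : weightSum 0 p = 0 :=
  weightSum_eq_zero fun _ hI hI' =>
    absurd (Finset.mem_singleton.1 (compositionList_zero ▸ hI)) hI'.ne_nil

theorem weightSum_one (p : List ℕ → Prop) [DecidablePred p] :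
    weightSum 1 p = if p [1] then 2 else 0 := by
  rw [weightSum, compositionList_one, Finset.filter_singleton]
  split_ifs with h1 h2 h2 <;> simp_all [IsOneTwoEndingInOne, weight]

theorem weightSum_eq_add_headI (n : ℕ) (p : List ℕ → Prop) [DecidablePred p] :
    weightSum n p
      = weightSum n (fun I => I.headI = 1 ∧ p I) + weightSum n (fun I => I.headI = 2 ∧ p I) := by
  rw [weightSum, ← Finset.sum_filter_add_sum_filter_not _ (fun I => I.headI = 1),
    Finset.filter_filter, Finset.filter_filter]
  congr 1 <;> refine Finset.sum_congr (Finset.filter_congr fun I _ => ?_) fun _ _ => rfl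
  · tauto
  · constructor
    · rintro ⟨⟨h1, h2⟩, h3⟩
      exact ⟨h1, h1.headI.resolve_left h3, h2⟩
    · rintro ⟨h1, h2, h3⟩
      exact ⟨⟨h1, h3⟩, by omega⟩

theorem weightSum_headI_one (m : ℕ) (p : List ℕ → Prop) [DecidablePred p] :
    weightSum (m + 2) (fun I => I.headI = 1 ∧ p I)
      = 2 * weightSum (m + 1) (fun I => p (1 :: I)) := by
  rw [weightSum, Finset.filter_congr fun I _ => and_left_comm, show m + 2 = m + 1 + 1 from rfl,
    sum_compositionList_filter_headI (m + 1) one_pos (fun I => IsOneTwoEndingInOne I ∧ p I),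
    weightSum, Finset.mul_sum]
  refine Finset.sum_congr (Finset.filter_congr fun I hI => ?_) fun I _ => weight_one_cons I
  rw [isOneTwoEndingInOne_one_cons (ne_nil_of_mem_compositionList m.succ_pos hI)]

theorem weightSum_headI_two (m : ℕ) (p : List ℕ → Prop) [DecidablePred p] :
    weightSum (m + 2) (fun I => I.headI = 2 ∧ p I) = -weightSum m (fun I => p (2 :: I)) := by
  rw [weightSum, Finset.filter_congr fun I _ => and_left_comm,
    sum_compositionList_filter_headI m two_pos (fun I => IsOneTwoEndingInOne I ∧ p I), weightSum,
    ← Finset.sum_neg_distrib]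
  refine Finset.sum_congr (Finset.filter_congr fun I _ => ?_) fun I _ => weight_two_cons I
  rw [isOneTwoEndingInOne_two_cons]

theorem weightSum_add_two (m : ℕ) (p : List ℕ → Prop) [DecidablePred p] :
    weightSum (m + 2) p
      = 2 * weightSum (m + 1) (fun I => p (1 :: I)) - weightSum m (fun I => p (2 :: I)) := by
  rw [weightSum_eq_add_headI, weightSum_headI_one, weightSum_headI_two, sub_eq_add_neg]

theorem weightSum_disjointDescents_cons_self {a m : ℕ} {K : List ℕ}
    (hK : K ∈ compositionList m) :
    weightSum m (fun I => DisjointDescents (a :: I) (a :: K)) = 0 := by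
  rcases eq_or_ne K [] with rfl | hK'
  · obtain rfl : 0 = m := by simpa using (mem_compositionList.1 hK).1
    exact weightSum_zero _
  · exact weightSum_eq_zero fun I _ hI => by simp [DisjointDescents.cons_self, hI.ne_nil, hK']

theorem weightSum_disjointDescents_one_cons {m k : ℕ} {K : List ℕ} :
    weightSum (m + 2) (DisjointDescents · (1 :: k :: K))
      = -weightSum m (fun I => DisjointDescents (1 :: I) (k :: K)) := by
  rw [weightSum_add_two, weightSum_eq_zero fun I _ hI => by
    simp [DisjointDescents.cons_self, hI.ne_nil]]
  simp only [DisjointDescents.cons_of_gt one_lt_two, mul_zero, zero_sub,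
    show 2 - 1 = 1 from rfl]

theorem weightSum_disjointDescents_two_cons {m : ℕ} {K : List ℕ}
    (hK : K ∈ compositionList m) :
    weightSum (m + 2) (DisjointDescents · (2 :: K))
      = 2 * weightSum (m + 1) (DisjointDescents · (1 :: K)) := by
  rw [weightSum_add_two, weightSum_disjointDescents_cons_self hK, sub_zero]
  simp only [DisjointDescents.cons_of_lt one_lt_two, show 2 - 1 = 1 from rfl]

theorem weightSum_disjointDescents_of_three_le {m k : ℕ} {K : List ℕ} (hk : 3 ≤ k) :
    weightSum (m + 2) (DisjointDescents · (k :: K))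
      = 2 * weightSum (m + 1) (DisjointDescents · ((k - 1) :: K))
        - weightSum m (DisjointDescents · ((k - 2) :: K)) := by
  rw [weightSum_add_two]
  simp only [DisjointDescents.cons_of_lt (by omega : 1 < k),
    DisjointDescents.cons_of_lt (by omega : 2 < k)]

def tailProd (K : List ℕ) : ℕ := (K.tail.map fun i => i - 1).prod

theorem weightSum_disjointDescents : ∀ {n : ℕ} {K : List ℕ}, K ∈ compositionList n →
    weightSum n (DisjointDescents · K) = -2 * (-1) ^ K.length * K.headI * tailProd K
  | 0, K, hK => by
    obtain rfl : K = [] := by simpa [compositionList_zero] using hK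
    simp [weightSum_zero]
  | 1, K, hK => by
    obtain rfl : K = [1] := by simpa [compositionList_one] using hK
    rw [weightSum_one, if_pos (DisjointDescents.singleton_right _ _)]
    norm_num [tailProd]
  | m + 2, [], hK => absurd rfl (ne_nil_of_mem_compositionList (by omega) hK)
  | m + 2, k :: K, hK => by
    have hk : 0 < k := (mem_compositionList.1 hK).2 k List.mem_cons_self
    rcases (show k = 1 ∨ k = 2 ∨ 3 ≤ k by omega) with rfl | rfl | hk3
    · have hK := (cons_mem_compositionList (m := m + 1) (a := 1)).1 hK |>.2
      obtain ⟨k', K, rfl⟩ :=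
        List.exists_cons_of_ne_nil (ne_nil_of_mem_compositionList m.succ_pos hK)
      have hk' : 0 < k' := (mem_compositionList.1 hK).2 k' List.mem_cons_self
      rw [weightSum_disjointDescents_one_cons]
      rcases (show k' = 1 ∨ 2 ≤ k' by omega) with rfl | hk'
      · simp [weightSum_disjointDescents_cons_self
          ((cons_mem_compositionList (m := m) (a := 1)).1 hK).2, tailProd]
      · rw [weightSum_congr fun I _ _ => DisjointDescents.cons_of_lt (by omega : 1 < k'),
          weightSum_disjointDescents (cons_sub_mem_compositionList (n := m) (d := 1) (by omega) hK)]
        simp only [tailProd, List.tail_cons, List.headI_cons, List.length_cons, List.map_cons,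
          List.prod_cons]
        push_cast [Nat.cast_sub (by omega : 1 ≤ k')]
        ring
    · rw [weightSum_disjointDescents_two_cons ((cons_mem_compositionList (m := m) (a := 2)).1 hK).2,
        weightSum_disjointDescents (K := 1 :: K)
          (cons_sub_mem_compositionList (n := m + 1) (d := 1) one_lt_two hK)]
      simp only [tailProd, List.tail_cons, List.headI_cons, List.length_cons]
      push_cast
      ring
    · rw [weightSum_disjointDescents_of_three_le hk3,
        weightSum_disjointDescents
          (cons_sub_mem_compositionList (n := m + 1) (d := 1) (by omega) hK),
        weightSum_disjointDescents (cons_sub_mem_compositionList (n := m) (d := 2) (by omega) hK)]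
      simp only [tailProd, List.tail_cons, List.headI_cons, List.length_cons]
      push_cast [Nat.cast_sub (by omega : 1 ≤ k), Nat.cast_sub (by omega : 2 ≤ k)]
      ring

theorem weightSum_take_two (m x : ℕ) (p : List ℕ → Prop) [DecidablePred p] :
    weightSum (m + 2) (fun I => I.take 2 = [1, x] ∧ p I)
      = 2 * weightSum (m + 1) (fun I => I.headI = x ∧ p (1 :: I)) := by
  rw [weightSum_congr (q := fun I => I.headI = 1 ∧ (I.take 2 = [1, x] ∧ p I)) fun I _ hI => ?_,
    weightSum_headI_one]
  · refine congrArg _ (weightSum_congr fun I _ hI => ?_)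
    obtain ⟨c, I, rfl⟩ := List.exists_cons_of_ne_nil hI.ne_nil
    simp [eq_comm]
  · obtain ⟨c, I, rfl⟩ := List.exists_cons_of_ne_nil hI.ne_nil
    refine ⟨fun ⟨h, hp⟩ => ⟨?_, h, hp⟩, And.right⟩
    simp only [List.take_succ_cons, List.cons.injEq] at h
    exact h.1

theorem weightSum_take_two_combination (m : ℕ) (p : List ℕ → Prop) [DecidablePred p] :
    (1 / 2 : ℚ) * weightSum (m + 3) (fun I => I.take 2 = [1, 2] ∧ p I)
      + (3 / 8 : ℚ) * weightSum (m + 3) (fun I => I.take 2 = [1, 1] ∧ p I)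
      = weightSum (m + 2) (fun I => p (1 :: I))
        - (1 / 2 : ℚ) * weightSum (m + 1) (fun I => p (1 :: 1 :: I)) := by
  rw [weightSum_take_two, weightSum_take_two,
    weightSum_eq_add_headI (m + 2) (fun I => p (1 :: I)), weightSum_headI_one]
  ring

theorem weightSum_take_two_combination_disjointDescents {m : ℕ} {L : List ℕ}
    (hL : L ∈ compositionList (m + 3)) :
    (1 / 2 : ℚ) * weightSum (m + 3) (fun I => I.take 2 = [1, 2] ∧ DisjointDescents I L)
      + (3 / 8 : ℚ) * weightSum (m + 3) (fun I => I.take 2 = [1, 1] ∧ DisjointDescents I L)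
      = -(-1) ^ L.length * if 2 ≤ L.headI then ((L.headI * tailProd L : ℕ) : ℚ) else 0 := by
  obtain ⟨k, L, rfl⟩ := List.exists_cons_of_ne_nil (ne_nil_of_mem_compositionList (by omega) hL)
  have hk : 0 < k := (mem_compositionList.1 hL).2 k List.mem_cons_self
  have hL' : k ≤ 2 → L ≠ [] := by
    rintro hk rfl
    simp [mem_compositionList] at hL
    omega
  rw [weightSum_take_two_combination]
  rcases (show k = 1 ∨ k = 2 ∨ 3 ≤ k by omega) with rfl | rfl | hk3
  · rw [weightSum_disjointDescents_cons_self
        ((cons_mem_compositionList (m := m + 2) (a := 1)).1 hL).2,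
      weightSum_eq_zero fun I _ hI => by simp [DisjointDescents.cons_self, hL' one_le_two]]
    simp
  · rw [weightSum_eq_zero (p := fun I => DisjointDescents (1 :: 1 :: I) (2 :: L)) fun I _ hI => by
        simp [DisjointDescents.cons_of_lt one_lt_two, DisjointDescents.cons_self, hL' le_rfl,
          hI.ne_nil],
      weightSum_congr fun I _ _ => DisjointDescents.cons_of_lt one_lt_two,
      weightSum_disjointDescents (cons_sub_mem_compositionList (n := m + 2) (d := 1) one_lt_two hL)]
    simp only [tailProd, List.tail_cons, List.headI_cons, List.length_cons]
    push_cast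
    ring
  · rw [weightSum_congr fun I _ _ => DisjointDescents.cons_of_lt (by omega : 1 < k),
      weightSum_congr (n := m + 1) (q := (DisjointDescents · ((k - 2) :: L))) fun I _ _ => by
        rw [DisjointDescents.cons_of_lt (by omega : 1 < k),
          DisjointDescents.cons_of_lt (by omega : 1 < k - 1), Nat.sub_sub],
      weightSum_disjointDescents (cons_sub_mem_compositionList (n := m + 2) (d := 1) (by omega) hL),
      weightSum_disjointDescents (cons_sub_mem_compositionList (n := m + 1) (d := 2) (by omega) hL),
      if_pos (show 2 ≤ (k :: L).headI from hk3.trans' (by norm_num))]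
    simp only [tailProd, List.tail_cons, List.headI_cons, List.length_cons]
    push_cast [Nat.cast_sub (by omega : 1 ≤ k), Nat.cast_sub (by omega : 2 ≤ k)]
    ring

theorem sum_filter_smul_lamProd {n : ℕ} (p : List ℕ → Prop) [DecidablePred p]
    (c : List ℕ → ℚ) :
    ∑ I ∈ Finset.univ.filter (fun I : Composition n => p I.blocks), c I.blocks • LamProd I
      = ∑ L ∈ compositionList n, (if p L then c L else 0) • lamList L := by
  rw [Finset.sum_filter, ← sum_univ_composition_blocks]
  exact Finset.sum_congr rfl fun I _ => by split_ifs <;> simp [LamProd, lamList]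

theorem sum_filter_smul_rib {n : ℕ} (hn : 0 < n) (q : List ℕ → Prop) [DecidablePred q] :
    ∑ I ∈ Finset.univ.filter
        (fun I : Composition n => IsOneTwoEndingInOne I.blocks ∧ q I.blocks),
        ((2 : ℚ) ^ I.blocks.count 1) • Rib I
      = ∑ L ∈ compositionList n,
          (-(-1 : ℚ) ^ L.length * weightSum n (fun I => q I ∧ DisjointDescents I L))
            • lamList L := by
  calc _ = ∑ I : Composition n, ∑ L ∈ compositionList n,
          (if IsOneTwoEndingInOne I.blocks ∧ q I.blocks ∧ DisjointDescents I.blocks L then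
            -(-1 : ℚ) ^ L.length * weight I.blocks else 0) • lamList L := by
        rw [Finset.sum_filter]
        refine Finset.sum_congr rfl fun I _ => ?_
        split_ifs with hp
        · rw [rib_eq_sum_lamList hn, Finset.smul_sum]
          refine Finset.sum_congr rfl fun L _ => ?_
          rw [smul_smul]
          by_cases hd : DisjointDescents I.blocks L
          · rw [if_pos hd, if_pos ⟨hp.1, hp.2, hd⟩, weight, I.blocks_sum]
            congr 1
            ring
          · rw [if_neg hd, if_neg fun h => hd h.2.2, mul_zero]
        · exact (Finset.sum_eq_zero fun L _ => by
            rw [if_neg fun h => hp ⟨h.1, h.2.1⟩, zero_smul]).symm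
    _ = _ := by
        rw [sum_univ_composition_blocks n fun B => ∑ L ∈ compositionList n,
          (if IsOneTwoEndingInOne B ∧ q B ∧ DisjointDescents B L then
            -(-1 : ℚ) ^ L.length * weight B else 0) • lamList L, Finset.sum_comm]
        refine Finset.sum_congr rfl fun L _ => ?_
        rw [← Finset.sum_smul, weightSum, Finset.sum_filter, Finset.mul_sum]
        simp only [mul_ite, mul_zero]

/-- In `NSym`, for every `n ≥ 3`:
`∑_{I ⊨ n, i₁ ≥ 2} i₁(i₂−1)⋯(i_l−1) Λ^I
  = (1/2) ∑_{I ∈ 𝒞_n, I starts with (1,2)} 2^{m₁(I)} R_I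
  + (3/8) ∑_{I ∈ 𝒞_n, I starts with (1,1)} 2^{m₁(I)} R_I`,
where `𝒞_n` is the set of compositions of `n` all of whose parts are `1` or `2` and
whose last part is `1`, and `m₁(I)` is the number of parts of `I` equal to `1`. -/
theorem sum_coeff_lam_first_ge_two_eq (n : ℕ) (hn : 3 ≤ n) :
    ∑ I ∈ Finset.univ.filter (fun I : Composition n => 2 ≤ I.blocks.headI),
        ((I.blocks.headI * ((I.blocks.tail).map (fun i => i - 1)).prod : ℕ) : ℚ) • LamProd I
      = (1 / 2 : ℚ) • ∑ I ∈ Finset.univ.filter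
            (fun I : Composition n =>
              ((∀ i ∈ I.blocks, i = 1 ∨ i = 2) ∧ I.blocks.getLast? = some 1) ∧
                I.blocks.take 2 = [1, 2]),
          ((2 : ℚ) ^ (I.blocks.count 1)) • Rib I
        + (3 / 8 : ℚ) • ∑ I ∈ Finset.univ.filter
            (fun I : Composition n =>
              ((∀ i ∈ I.blocks, i = 1 ∨ i = 2) ∧ I.blocks.getLast? = some 1) ∧
                I.blocks.take 2 = [1, 1]),
          ((2 : ℚ) ^ (I.blocks.count 1)) • Rib I := by
  obtain ⟨m, rfl⟩ : ∃ m, n = m + 3 := ⟨n - 3, by omega⟩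
  rw [sum_filter_smul_lamProd (fun B => 2 ≤ B.headI)
      (fun B => ((B.headI * (B.tail.map fun i => i - 1).prod : ℕ) : ℚ)),
    sum_filter_smul_rib (by omega) (fun B => B.take 2 = [1, 2]),
    sum_filter_smul_rib (by omega) (fun B => B.take 2 = [1, 1]),
    Finset.smul_sum, Finset.smul_sum, ← Finset.sum_add_distrib]
  refine Finset.sum_congr rfl fun L hL => ?_
  rw [smul_smul, smul_smul, ← add_smul, mul_left_comm (1 / 2 : ℚ), mul_left_comm (3 / 8 : ℚ),
    ← mul_add, weightSum_take_two_combination_disjointDescents hL,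
    neg_neg_one_pow_mul_neg_neg_one_pow_mul]
  rfl

end
end

section
/- For all integers n ≥ 2 and N ≥ 1: (a) for every 1 ≤ k ≤ n−1 there exist nonnegative integers c_λ, indexed by the partitions λ of n, such that X_{P_n}^{(N)} − (k−1)·e_k·X_{P_{n−k}}^{(N)} = Σ_{λ ⊢ n} c_λ · e_{λ_1} e_{λ_2} ⋯ ; and (b) there exist nonnegative integers c_λ, indexed by the partitions λ of n, such that X_{P_n}^{(N)} − n·e_n = Σ_{λ ⊢ n} c_λ · e_{λ_1} e_{λ_2} ⋯ . -/
/-!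
With the power sums `p_d`, put `Q(t) = 1 + ∑_{d ≥ 1} (-1)^d p_d t^d`. Colouring the end vertex
of a path first and correcting for the one forbidden colour by inclusion–exclusion gives
`Q(t) · ∑ₙ X_{P_n} tⁿ = 1`, while Newton's identities say
`Q(t) · ∑ₖ e_k tᵏ = ∑ₖ (1 - k) e_k tᵏ`. Multiplying the second identity by `∑ₙ X_{P_n} tⁿ`
yields `X_{P_{m+1}} = e_{m+1} + ∑_{a+b=m} a · e_{a+1} X_{P_b}`, so every `X_{P_n}` is
e-positive by induction, and both differences in the theorem are this expansion with one of its
nonnegative terms removed (for `k = n`, together with `e_n`).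
-/

open scoped Classical

noncomputable section

def chromPoly (N : ℕ) {V : Type} [Fintype V] [DecidableEq V] (G : SimpleGraph V) :
    MvPolynomial (Fin N) ℤ :=
  ∑ c ∈ Finset.univ.filter (fun c : V → Fin N => ∀ u v, G.Adj u v → c u ≠ c v),
    ∏ v, MvPolynomial.X (c v)

open Finset
open scoped Pointwise

namespace MvPolynomial

section ePositiveCone

variable (σ R : Type*) [CommSemiring R] [Fintype σ]

def ePositiveCone (n : ℕ) : AddSubmonoid (MvPolynomial σ R) :=
  AddSubmonoid.closure (Set.range (esymmPart σ R (n := n)))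

variable {σ R}

theorem mem_ePositiveCone_iff {n : ℕ} {A : MvPolynomial σ R} :
    A ∈ ePositiveCone σ R n ↔ ∃ c : n.Partition → ℕ, A = ∑ P, c P • esymmPart σ R P :=
  AddSubmonoid.mem_closure_range_iff_of_fintype

theorem esymm_mem_ePositiveCone (n : ℕ) : esymm σ R n ∈ ePositiveCone σ R n :=
  AddSubmonoid.subset_closure ⟨_, esymmPart_indiscrete σ R n⟩

theorem esymmPart_mul_esymmPart {m n : ℕ} (P : m.Partition) (Q : n.Partition) :
    esymmPart σ R P * esymmPart σ R Q =
      esymmPart σ R (.ofSums (m + n) (P.parts + Q.parts) (by simp [P.parts_sum, Q.parts_sum])) := by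
  have hpos : ∀ i ∈ P.parts + Q.parts, i ≠ 0 := by
    simp only [Multiset.mem_add]
    rintro i (hi | hi)
    exacts [(P.parts_pos hi).ne', (Q.parts_pos hi).ne']
  simp [esymmPart, Nat.Partition.ofSums, Multiset.filter_eq_self.mpr hpos]

theorem mul_mem_ePositiveCone {m n : ℕ} {A B : MvPolynomial σ R} (hA : A ∈ ePositiveCone σ R m)
    (hB : B ∈ ePositiveCone σ R n) : A * B ∈ ePositiveCone σ R (m + n) := by
  suffices ePositiveCone σ R m * ePositiveCone σ R n ≤ ePositiveCone σ R (m + n) from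
    this (AddSubmonoid.mul_mem_mul hA hB)
  rw [ePositiveCone, ePositiveCone, AddSubmonoid.closure_mul_closure]
  refine AddSubmonoid.closure_mono ?_
  rintro _ ⟨_, ⟨P, rfl⟩, _, ⟨Q, rfl⟩, rfl⟩
  exact ⟨_, (esymmPart_mul_esymmPart P Q).symm⟩

theorem esymm_mul_mem_ePositiveCone_of_mem_antidiagonal {m : ℕ} {p : ℕ × ℕ}
    (hp : p ∈ antidiagonal m) {A : MvPolynomial σ R} (hA : A ∈ ePositiveCone σ R p.2) :
    esymm σ R (p.1 + 1) * A ∈ ePositiveCone σ R (m + 1) := by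
  have hdeg : p.1 + 1 + p.2 = m + 1 := by rw [HasAntidiagonal.mem_antidiagonal] at hp; omega
  exact hdeg ▸ mul_mem_ePositiveCone (esymm_mem_ePositiveCone _) hA

end ePositiveCone

section Newton

variable (σ R : Type*) [CommRing R] [Fintype σ]

def signedPsumSeries : PowerSeries (MvPolynomial σ R) :=
  PowerSeries.mk fun d => if d = 0 then 1 else (-1) ^ d * psum σ R d

theorem esymmSeries_mul_signedPsumSeries :
    PowerSeries.mk (esymm σ R) * signedPsumSeries σ R =
      PowerSeries.mk fun k => (1 - k) * esymm σ R k := by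
  refine PowerSeries.ext fun k => ?_
  have newton := mul_esymm_eq_sum σ R k
  rw [sum_filter, Nat.sum_antidiagonal_eq_sum_range_succ_mk, sum_range_succ,
    if_neg (lt_irrefl k), add_zero, sum_congr rfl fun i hi => if_pos (mem_range.mp hi)] at newton
  have hterm : ∀ i ∈ range k, esymm σ R i * PowerSeries.coeff (k - i) (signedPsumSeries σ R) =
      (-1) ^ k * ((-1) ^ i * esymm σ R i * psum σ R (k - i)) := by
    intro i hi
    have hsign : (-1 : MvPolynomial σ R) ^ (k - i) = (-1) ^ k * (-1) ^ i := by
      obtain ⟨j, rfl⟩ := Nat.exists_eq_add_of_le (mem_range.mp hi).le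
      rw [Nat.add_sub_cancel_left, pow_add, mul_right_comm, ← pow_add, Even.neg_one_pow ⟨i, rfl⟩,
        one_mul]
    rw [signedPsumSeries, PowerSeries.coeff_mk, if_neg (Nat.sub_ne_zero_of_lt (mem_range.mp hi)),
      hsign]
    ring
  rw [PowerSeries.coeff_mul, Nat.sum_antidiagonal_eq_sum_range_succ_mk, sum_range_succ]
  simp only [PowerSeries.coeff_mk]
  rw [sum_congr rfl hterm, ← mul_sum, Nat.sub_self, signedPsumSeries, PowerSeries.coeff_mk,
    if_pos rfl]
  linear_combination newton

end Newton

end MvPolynomial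

open MvPolynomial SimpleGraph

def SimpleGraph.IsProperColoring {V α : Type*} (G : SimpleGraph V) (c : V → α) : Prop :=
  ∀ u v, G.Adj u v → c u ≠ c v

theorem SimpleGraph.isProperColoring_pathGraph_iff {α : Type*} {m : ℕ} {c : Fin (m + 1) → α} :
    (pathGraph (m + 1)).IsProperColoring c ↔ ∀ i : Fin m, c i.castSucc ≠ c i.succ := by
  refine ⟨fun h i => h _ _ (by simp [pathGraph_adj]), fun h u v huv => ?_⟩
  wlog huv' : u.val + 1 = v.val generalizing u v
  · exact (this v u huv.symm (by rw [pathGraph_adj] at huv; omega)).symm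
  obtain ⟨i, rfl, rfl⟩ : ∃ i : Fin m, u = i.castSucc ∧ v = i.succ :=
    ⟨⟨u, by omega⟩, rfl, Fin.ext (by simp; omega)⟩
  exact h i

theorem SimpleGraph.isProperColoring_pathGraph_cons {α : Type*} {m : ℕ} (j : α)
    (c : Fin (m + 1) → α) :
    (pathGraph (m + 2)).IsProperColoring (Fin.cons j c : Fin (m + 2) → α) ↔
      (pathGraph (m + 1)).IsProperColoring c ∧ c 0 ≠ j := by
  simp [isProperColoring_pathGraph_iff, Fin.forall_fin_succ, ne_comm, and_comm]

theorem chromPoly_eq_sum_isProperColoring (N : ℕ) {V : Type} [Fintype V] [DecidableEq V]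
    (G : SimpleGraph V) :
    chromPoly N G = ∑ c ∈ univ.filter G.IsProperColoring, ∏ v, X (c v) := by
  unfold chromPoly IsProperColoring
  congr

theorem chromPoly_pathGraph_zero (N : ℕ) : chromPoly N (pathGraph 0) = 1 := by
  simp [chromPoly]

def endWeightedPathChromPoly (N m r : ℕ) : MvPolynomial (Fin N) ℤ :=
  ∑ c ∈ univ.filter (pathGraph (m + 1)).IsProperColoring, X (c 0) ^ r * ∏ v, X (c v)

theorem endWeightedPathChromPoly_zero_left (N r : ℕ) :
    endWeightedPathChromPoly N 0 r = psum (Fin N) ℤ (r + 1) := by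
  rw [endWeightedPathChromPoly, filter_true_of_mem fun c _ => isProperColoring_pathGraph_iff.mpr
    finZeroElim, psum, ← (Equiv.funUnique (Fin 1) (Fin N)).symm.sum_comp]
  simp [pow_succ]

theorem endWeightedPathChromPoly_zero_right (N m : ℕ) :
    endWeightedPathChromPoly N m 0 = chromPoly N (pathGraph (m + 1)) := by
  simp [endWeightedPathChromPoly, chromPoly_eq_sum_isProperColoring]

theorem sum_isProperColoring_pathGraph_succ {M : Type*} [AddCommMonoid M] {α : Type*} [Fintype α]
    [DecidableEq α] (m : ℕ) (g : (Fin (m + 2) → α) → M) :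
    ∑ c ∈ univ.filter (pathGraph (m + 2)).IsProperColoring, g c =
      ∑ j, ∑ c ∈ univ.filter (pathGraph (m + 1)).IsProperColoring,
        if c 0 = j then 0 else g (Fin.cons j c) := by
  rw [sum_filter, ← (Fin.consEquiv fun _ => α).sum_comp, Fintype.sum_prod_type]
  refine sum_congr rfl fun j _ => ?_
  rw [sum_filter]
  refine sum_congr rfl fun c _ => ?_
  simp only [Fin.consEquiv, Equiv.coe_fn_mk, isProperColoring_pathGraph_cons]
  split_ifs <;> simp_all

/-- Colour vertex `0` first; the colourings of the rest that clash with it are exactly those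
counted by the end-weighted sum with exponent `r + 1`. -/
theorem endWeightedPathChromPoly_succ (N m r : ℕ) :
    endWeightedPathChromPoly N (m + 1) r =
      psum (Fin N) ℤ (r + 1) * chromPoly N (pathGraph (m + 1)) -
        endWeightedPathChromPoly N m (r + 1) := by
  rw [endWeightedPathChromPoly, sum_isProperColoring_pathGraph_succ]
  simp only [Fin.cons_zero, Fin.prod_univ_succ (n := m + 1), Fin.cons_succ]
  have hsplit : ∀ j (c : Fin (m + 1) → Fin N),
      (if c 0 = j then 0 else X j ^ r * (X j * ∏ v, X (c v)) : MvPolynomial (Fin N) ℤ) =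
        X j ^ (r + 1) * ∏ v, X (c v) - if c 0 = j then X (c 0) ^ (r + 1) * ∏ v, X (c v) else 0 := by
    intro j c
    split_ifs with h
    · rw [h, sub_self]
    · rw [sub_zero, pow_succ, mul_assoc]
  simp only [hsplit, sum_sub_distrib, endWeightedPathChromPoly, chromPoly_eq_sum_isProperColoring,
    psum, sum_mul_sum]
  congr 1
  rw [sum_comm]
  simp

theorem endWeightedPathChromPoly_eq_sum (N m r : ℕ) :
    endWeightedPathChromPoly N m r = ∑ p ∈ antidiagonal m,
      (-1) ^ p.1 * psum (Fin N) ℤ (p.1 + r + 1) * chromPoly N (pathGraph p.2) := by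
  induction m generalizing r with
  | zero => simp [endWeightedPathChromPoly_zero_left, chromPoly_pathGraph_zero, add_comm]
  | succ m ih =>
    rw [endWeightedPathChromPoly_succ, ih, Nat.sum_antidiagonal_succ, sub_eq_add_neg,
      ← sum_neg_distrib]
    congr 1
    · simp [add_comm]
    · refine sum_congr rfl fun p _ => ?_
      ring_nf

theorem chromPoly_pathGraph_succ_eq_sum_psum (N m : ℕ) :
    chromPoly N (pathGraph (m + 1)) = ∑ p ∈ antidiagonal m,
      (-1) ^ p.1 * psum (Fin N) ℤ (p.1 + 1) * chromPoly N (pathGraph p.2) := by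
  rw [← endWeightedPathChromPoly_zero_right, endWeightedPathChromPoly_eq_sum]

def pathChromSeries (N : ℕ) : PowerSeries (MvPolynomial (Fin N) ℤ) :=
  PowerSeries.mk fun n => chromPoly N (pathGraph n)

theorem signedPsumSeries_mul_pathChromSeries (N : ℕ) :
    signedPsumSeries (Fin N) ℤ * pathChromSeries N = 1 := by
  refine PowerSeries.ext fun n => ?_
  rcases n with _ | m
  · simp [signedPsumSeries, pathChromSeries, chromPoly_pathGraph_zero]
  · rw [PowerSeries.coeff_mul, Nat.sum_antidiagonal_succ, PowerSeries.coeff_one,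
      if_neg m.succ_ne_zero]
    simp only [signedPsumSeries, pathChromSeries, PowerSeries.coeff_mk, if_pos,
      if_neg (Nat.succ_ne_zero _)]
    rw [one_mul, chromPoly_pathGraph_succ_eq_sum_psum, ← sum_add_distrib]
    exact sum_eq_zero fun p _ => by ring

theorem chromPoly_pathGraph_succ (N m : ℕ) :
    chromPoly N (pathGraph (m + 1)) = esymm (Fin N) ℤ (m + 1) +
      ∑ p ∈ antidiagonal m, p.1 • (esymm (Fin N) ℤ (p.1 + 1) * chromPoly N (pathGraph p.2)) := by
  have key : (PowerSeries.mk fun k => (1 - k) * esymm (Fin N) ℤ k) * pathChromSeries N =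
      PowerSeries.mk (esymm (Fin N) ℤ) := by
    rw [← esymmSeries_mul_signedPsumSeries, mul_assoc, signedPsumSeries_mul_pathChromSeries,
      mul_one]
  have h := congrArg (PowerSeries.coeff (m + 1)) key
  rw [PowerSeries.coeff_mul, Nat.sum_antidiagonal_succ] at h
  simp only [pathChromSeries, PowerSeries.coeff_mk] at h
  rw [← h, add_assoc, ← sum_add_distrib,
    sum_eq_zero fun p _ => by rw [nsmul_eq_mul]; push_cast; ring]
  simp

theorem chromPoly_pathGraph_mem_ePositiveCone (N n : ℕ) :
    chromPoly N (pathGraph n) ∈ ePositiveCone (Fin N) ℤ n := by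
  induction n using Nat.strong_induction_on with
  | _ n ih =>
    rcases n with _ | m
    · rw [chromPoly_pathGraph_zero, ← esymm_zero (Fin N) ℤ]
      exact esymm_mem_ePositiveCone 0
    · rw [chromPoly_pathGraph_succ]
      refine add_mem (esymm_mem_ePositiveCone _) (sum_mem fun p hp => nsmul_mem ?_ _)
      refine esymm_mul_mem_ePositiveCone_of_mem_antidiagonal hp (ih _ ?_)
      rw [HasAntidiagonal.mem_antidiagonal] at hp
      omega

theorem chromPoly_pathGraph_succ_sub_mem_ePositiveCone (N : ℕ) {m : ℕ} {p : ℕ × ℕ}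
    (hp : p ∈ antidiagonal m) :
    chromPoly N (pathGraph (m + 1)) -
        p.1 • (esymm (Fin N) ℤ (p.1 + 1) * chromPoly N (pathGraph p.2)) -
          esymm (Fin N) ℤ (m + 1) ∈ ePositiveCone (Fin N) ℤ (m + 1) := by
  have hrest : ∑ q ∈ (antidiagonal m).erase p,
      q.1 • (esymm (Fin N) ℤ (q.1 + 1) * chromPoly N (pathGraph q.2)) ∈
        ePositiveCone (Fin N) ℤ (m + 1) :=
    sum_mem fun q hq => nsmul_mem (esymm_mul_mem_ePositiveCone_of_mem_antidiagonal
      (mem_of_mem_erase hq) (chromPoly_pathGraph_mem_ePositiveCone N _)) _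
  rw [chromPoly_pathGraph_succ, ← add_sum_erase _ _ hp]
  convert hrest using 1
  abel

theorem chromPoly_pathGraph_sub_ePositive_general (n N : ℕ) (hn : 2 ≤ n) :
    (∀ k, 1 ≤ k → k ≤ n - 1 →
      ∃ c : n.Partition → ℕ,
        chromPoly N (SimpleGraph.pathGraph n)
            - (k - 1) • (MvPolynomial.esymm (Fin N) ℤ k *
                chromPoly N (SimpleGraph.pathGraph (n - k)))
          = ∑ P : n.Partition, c P • (P.parts.map (MvPolynomial.esymm (Fin N) ℤ)).prod) ∧
    (∃ c : n.Partition → ℕ,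
      chromPoly N (SimpleGraph.pathGraph n) - n • MvPolynomial.esymm (Fin N) ℤ n
        = ∑ P : n.Partition, c P • (P.parts.map (MvPolynomial.esymm (Fin N) ℤ)).prod) := by
  obtain ⟨m, rfl⟩ : ∃ m, n = m + 1 := ⟨n - 1, by omega⟩
  refine ⟨fun k hk1 hkn => ?_, ?_⟩
  · obtain ⟨a, rfl⟩ : ∃ a, k = a + 1 := ⟨k - 1, by omega⟩
    have hp : (a, m - a) ∈ antidiagonal m := HasAntidiagonal.mem_antidiagonal.mpr (by dsimp; omega)
    have h := add_mem (chromPoly_pathGraph_succ_sub_mem_ePositiveCone N hp)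
      (esymm_mem_ePositiveCone _)
    rw [sub_add_cancel] at h
    rw [Nat.add_sub_cancel, Nat.add_sub_add_right]
    exact mem_ePositiveCone_iff.mp h
  · have h := chromPoly_pathGraph_succ_sub_mem_ePositiveCone N
      (p := (m, 0)) (HasAntidiagonal.mem_antidiagonal.mpr (add_zero m))
    rw [chromPoly_pathGraph_zero, mul_one, sub_sub, ← succ_nsmul] at h
    exact mem_ePositiveCone_iff.mp h

/-- For all `n ≥ 2` and `N ≥ 1`:
(a) for every `1 ≤ k ≤ n−1` the difference `X_{P_n} − (k−1)·e_k·X_{P_{n−k}}` is a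
nonnegative integer combination of the products `e_λ = e_{λ₁}e_{λ₂}⋯` over partitions
`λ ⊢ n`; and (b) so is `X_{P_n} − n·e_n`. -/
theorem chromPoly_pathGraph_sub_ePositive (n N : ℕ) (hn : 2 ≤ n) (hN : 1 ≤ N) :
    (∀ k, 1 ≤ k → k ≤ n - 1 →
      ∃ c : n.Partition → ℕ,
        chromPoly N (SimpleGraph.pathGraph n)
            - (k - 1) • (MvPolynomial.esymm (Fin N) ℤ k *
                chromPoly N (SimpleGraph.pathGraph (n - k)))
          = ∑ P : n.Partition, c P • (P.parts.map (MvPolynomial.esymm (Fin N) ℤ)).prod) ∧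
    (∃ c : n.Partition → ℕ,
      chromPoly N (SimpleGraph.pathGraph n) - n • MvPolynomial.esymm (Fin N) ℤ n
        = ∑ P : n.Partition, c P • (P.parts.map (MvPolynomial.esymm (Fin N) ℤ)).prod) :=
  chromPoly_pathGraph_sub_ePositive_general n N hn

end
end
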